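/- arXiv:2203.04196 — 3 statements merged into one kernel-verified Lean document; each statement's English description precedes it below -/
import Mathlib

section
/- For every integer m ≥ 1 and every n ≥ 1, the rising factorial (Pochhammer) moments of the number of nonzero steps satisfy E[Σ_n·(Σ_n+1)···(Σ_n+m-1)] = m!·Γ(n + m·b) / (Γ(n)·Γ(1 + m·b)). -/
open MeasureTheory Filter Real Topology

noncomputable section

/-- The elephant random walk with stops (ERWS): a sequence of steps `X n` (for `n ≥ 1`),
adapted to a filtration `F`, with values in `{-1, 0, 1}`, prescribed first-step law and
prescribed conditional first and second moments of the steps. -/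
structure ERWS {Ω : Type*} [m0 : MeasurableSpace Ω] (μ : Measure Ω) (p q s : ℝ) where
  X : ℕ → Ω → ℝ
  F : MeasureTheory.Filtration ℕ m0
  adapted : ∀ n, 1 ≤ n → StronglyMeasurable[F n] (X n)
  val_mem : ∀ n, 1 ≤ n → ∀ ω, X n ω = -1 ∨ X n ω = 0 ∨ X n ω = 1
  init_one : μ {ω | X 1 ω = 1} = ENNReal.ofReal s
  init_neg : μ {ω | X 1 ω = -1} = ENNReal.ofReal (1 - s)
  cond_one : ∀ n, 1 ≤ n →
    μ[X (n + 1)|F n] =ᵐ[μ] fun ω => (p - q) * (∑ k ∈ Finset.Icc 1 n, X k ω) / n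
  cond_two : ∀ n, 1 ≤ n →
    μ[fun ω => (X (n + 1) ω) ^ 2|F n] =ᵐ[μ]
      fun ω => (p + q) * (∑ k ∈ Finset.Icc 1 n, (X k ω) ^ 2) / n

namespace ERWS

variable {Ω : Type*} [m0 : MeasurableSpace Ω] {μ : Measure Ω} {p q s : ℝ}

/-- The position `S n = X 1 + ⋯ + X n` of the ERWS. -/
def S (e : ERWS μ p q s) (n : ℕ) (ω : Ω) : ℝ := ∑ k ∈ Finset.Icc 1 n, e.X k ω

/-- The number of nonzero steps `Σ n = X 1 ² + ⋯ + X n ²` of the ERWS. -/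
def Sig (e : ERWS μ p q s) (n : ℕ) (ω : Ω) : ℝ := ∑ k ∈ Finset.Icc 1 n, (e.X k ω) ^ 2

end ERWS

/-!
Write `P_m(x) = x (x + 1) ⋯ (x + m - 1)` and `b = p + q`. Since the step `Y = X_{N+1}²` is `0` or
`1`, `P_m(Σ_{N+1}) = P_m(Σ_N) + Y (P_m(Σ_N + 1) - P_m(Σ_N))`, and conditioning on `F_N` replaces
`Y` by `b Σ_N / N`. As `x (P_m(x + 1) - P_m(x)) = m P_m(x)`, this gives
`E[P_m(Σ_{N+1})] = (1 + m b / N) E[P_m(Σ_N)]`, while `Σ_1 = 1` almost surely, so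
`E[P_m(Σ_1)] = m!`. The recurrence is solved by `Γ(N + m b) / Γ(N)`.
-/

open Finset

theorem mul_prod_range_add_one_add {R : Type*} [CommSemiring R] (a : R) (m : ℕ) :
    a * ∏ j ∈ range m, (a + 1 + j) = (a + m) * ∏ j ∈ range m, (a + j) := by
  rw [mul_comm (a + m), ← prod_range_succ (fun j : ℕ => a + j), prod_range_succ']
  simp only [Nat.cast_add, Nat.cast_one, Nat.cast_zero, add_zero, add_assoc, add_comm (1 : R)]
  exact mul_comm _ _

theorem prod_range_one_add_eq_factorial {R : Type*} [CommSemiring R] (m : ℕ) :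
    ∏ j ∈ range m, ((1 : R) + j) = m.factorial := by
  rw [← prod_range_add_one_eq_factorial, Nat.cast_prod]
  push_cast
  simp only [add_comm]

theorem eq_mul_Gamma_div_of_forall_succ_eq {a : ℕ → ℝ} {c : ℝ} (hc : -1 < c)
    (ha : ∀ N, 1 ≤ N → a (N + 1) = (1 + c / N) * a N) {n : ℕ} (hn : 1 ≤ n) :
    a n = a 1 * Gamma (n + c) / (Gamma n * Gamma (1 + c)) := by
  have hΓc : Gamma (1 + c) ≠ 0 := (Gamma_pos_of_pos (by linarith)).ne'
  induction n, hn using Nat.le_induction with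
  | base => simp [hΓc]
  | succ N hN ih =>
    have hN1 : (1 : ℝ) ≤ N := by exact_mod_cast hN
    have hN0 : (0 : ℝ) < N := by linarith
    have hΓN : Gamma N ≠ 0 := (Gamma_pos_of_pos hN0).ne'
    rw [ha N hN, ih, Nat.cast_succ, Gamma_add_one hN0.ne', add_right_comm,
      Gamma_add_one (by linarith)]
    field_simp

theorem Continuous.integrable_comp_of_mem_Icc {Ω : Type*} [MeasurableSpace Ω] {μ : Measure Ω}
    [IsFiniteMeasure μ] {g : ℝ → ℝ} (hg : Continuous g) {f : Ω → ℝ}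
    (hf : AEStronglyMeasurable f μ) {a b : ℝ} (hab : ∀ ω, f ω ∈ Set.Icc a b) :
    Integrable (fun ω => g (f ω)) μ := by
  obtain ⟨C, hC⟩ := isCompact_Icc.exists_bound_of_continuousOn hg.continuousOn
  exact .of_bound (hg.comp_aestronglyMeasurable hf) C (ae_of_all _ fun ω => hC _ (hab ω))

namespace ERWS

variable {Ω : Type*} [m0 : MeasurableSpace Ω] {μ : Measure Ω} {p q s : ℝ} (e : ERWS μ p q s)

theorem sq_X_eq_zero_or_one {k : ℕ} (hk : 1 ≤ k) (ω : Ω) :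
    e.X k ω ^ 2 = 0 ∨ e.X k ω ^ 2 = 1 := by
  rcases e.val_mem k hk ω with h | h | h <;> simp [h]

theorem stronglyMeasurable_Sig (n : ℕ) : StronglyMeasurable[e.F n] (e.Sig n) :=
  stronglyMeasurable_fun_sum _ fun k hk =>
    ((e.adapted k (mem_Icc.1 hk).1).mono (e.F.mono (mem_Icc.1 hk).2)).pow 2

theorem Sig_mem_Icc (n : ℕ) (ω : Ω) : e.Sig n ω ∈ Set.Icc 0 (n : ℝ) := by
  have h01 : ∀ k ∈ Icc 1 n, e.X k ω ^ 2 ∈ Set.Icc (0 : ℝ) 1 := fun k hk => by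
    rcases e.sq_X_eq_zero_or_one (mem_Icc.1 hk).1 ω with h | h <;> simp [h]
  constructor
  · exact sum_nonneg fun k hk => (h01 k hk).1
  · simpa [Sig] using sum_le_sum fun k hk => (h01 k hk).2

theorem Sig_succ (n : ℕ) (ω : Ω) : e.Sig (n + 1) ω = e.Sig n ω + e.X (n + 1) ω ^ 2 :=
  sum_Icc_succ_top (Nat.le_add_left 1 n) _

theorem ae_Sig_one_eq_one [IsProbabilityMeasure μ] : ∀ᵐ ω ∂μ, e.Sig 1 ω = 1 := by
  have hX : Measurable (e.X 1) := ((e.adapted 1 le_rfl).mono (e.F.le 1)).measurable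
  have hA : MeasurableSet {ω | e.X 1 ω = 1} := hX (measurableSet_singleton 1)
  have hB : MeasurableSet {ω | e.X 1 ω = -1} := hX (measurableSet_singleton (-1))
  have hAB : Disjoint {ω | e.X 1 ω = 1} {ω | e.X 1 ω = -1} :=
    Set.disjoint_left.2 fun ω (h1 : e.X 1 ω = 1) (h2 : e.X 1 ω = -1) => by linarith
  -- `ofReal s + ofReal (1 - s) ≥ 1` whatever `s` is, so `X 1 = ±1` almost surely
  have hae : {ω | e.X 1 ω = 1} ∪ {ω | e.X 1 ω = -1} ∈ ae μ := by
    refine (mem_ae_iff_prob_eq_one (hA.union hB)).2 (le_antisymm prob_le_one ?_)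
    rw [measure_union hAB hB, e.init_one, e.init_neg]
    simpa using ENNReal.ofReal_add_le (p := s) (q := 1 - s)
  filter_upwards [hae] with ω hω
  rcases hω with (h : e.X 1 ω = 1) | (h : e.X 1 ω = -1) <;> simp [Sig, h]

theorem stronglyMeasurable_sq_X {k : ℕ} (hk : 1 ≤ k) :
    StronglyMeasurable (fun ω => e.X k ω ^ 2) :=
  ((e.adapted k hk).mono (e.F.le k)).pow 2

theorem integrable_mul_sq_X [IsFiniteMeasure μ] {k : ℕ} (hk : 1 ≤ k) {Q : Ω → ℝ}
    (hQ : Integrable Q μ) : Integrable (fun ω => Q ω * e.X k ω ^ 2) μ :=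
  hQ.mul_bdd (c := 1) (e.stronglyMeasurable_sq_X hk).aestronglyMeasurable <|
    ae_of_all _ fun ω => by rcases e.sq_X_eq_zero_or_one hk ω with h | h <;> simp [h]

theorem integral_mul_sq_X_succ [IsFiniteMeasure μ] {N : ℕ} (hN : 1 ≤ N) {Q : Ω → ℝ}
    (hQm : StronglyMeasurable[e.F N] Q) (hQ : Integrable Q μ) :
    ∫ ω, Q ω * e.X (N + 1) ω ^ 2 ∂μ = (p + q) / N * ∫ ω, Q ω * e.Sig N ω ∂μ := by
  have hk : 1 ≤ N + 1 := Nat.le_add_left 1 N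
  have hY : Integrable (fun ω => e.X (N + 1) ω ^ 2) μ := by
    simpa using e.integrable_mul_sq_X hk (integrable_const 1)
  calc ∫ ω, Q ω * e.X (N + 1) ω ^ 2 ∂μ
      = ∫ ω, (μ[Q * fun ω => e.X (N + 1) ω ^ 2|e.F N]) ω ∂μ :=
        (integral_condExp (e.F.le N)).symm
    _ = ∫ ω, (p + q) / N * (Q ω * e.Sig N ω) ∂μ := by
      refine integral_congr_ae ?_
      filter_upwards [condExp_mul_of_stronglyMeasurable_left hQm (e.integrable_mul_sq_X hk hQ) hY,
        e.cond_two N hN] with ω hpull hcond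
      rw [hpull, Pi.mul_apply, hcond, Sig]
      ring
    _ = _ := integral_const_mul _ _

theorem integral_prod_Sig_succ [IsFiniteMeasure μ] (m : ℕ) {N : ℕ} (hN : 1 ≤ N) :
    ∫ ω, ∏ j ∈ range m, (e.Sig (N + 1) ω + j) ∂μ
      = (1 + m * (p + q) / N) * ∫ ω, ∏ j ∈ range m, (e.Sig N ω + j) ∂μ := by
  set P : ℝ → ℝ := fun x => ∏ j ∈ range m, (x + j)
  set D : ℝ → ℝ := fun x => P (x + 1) - P x
  have hPc : Continuous P := by fun_prop
  have hDc : Continuous D := (hPc.comp (continuous_add_const 1)).sub hPc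
  have hdiff : ∀ x, D x * x = m * P x := fun x => by
    linear_combination mul_prod_range_add_one_add x m
  have hstep : ∀ ω, P (e.Sig (N + 1) ω) = P (e.Sig N ω) + D (e.Sig N ω) * e.X (N + 1) ω ^ 2 :=
    fun ω => by
      rcases e.sq_X_eq_zero_or_one (Nat.le_add_left 1 N) ω with h | h <;>
        simp only [Sig_succ, h, D, add_zero, mul_zero, mul_one, add_sub_cancel]
  have hSig : AEStronglyMeasurable (e.Sig N) μ :=
    ((e.stronglyMeasurable_Sig N).mono (e.F.le N)).aestronglyMeasurable
  have hPint : Integrable (fun ω => P (e.Sig N ω)) μ :=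
    hPc.integrable_comp_of_mem_Icc hSig (e.Sig_mem_Icc N)
  have hDint : Integrable (fun ω => D (e.Sig N ω)) μ :=
    hDc.integrable_comp_of_mem_Icc hSig (e.Sig_mem_Icc N)
  rw [integral_congr_ae (ae_of_all _ hstep),
    integral_add hPint (e.integrable_mul_sq_X (Nat.le_add_left 1 N) hDint),
    e.integral_mul_sq_X_succ hN (hDc.comp_stronglyMeasurable (e.stronglyMeasurable_Sig N)) hDint]
  simp_rw [hdiff, integral_const_mul]
  ring

theorem integral_prod_Sig_one [IsProbabilityMeasure μ] (m : ℕ) :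
    ∫ ω, ∏ j ∈ range m, (e.Sig 1 ω + j) ∂μ = m.factorial := by
  rw [integral_congr_ae (e.ae_Sig_one_eq_one.mono fun ω h => by rw [h]), integral_const,
    probReal_univ, one_smul, prod_range_one_add_eq_factorial]

end ERWS

theorem erws_Sig_pochhammer_moments_general
    {Ω : Type*} [m0 : MeasurableSpace Ω] {μ : Measure Ω} [IsProbabilityMeasure μ]
    {p q s : ℝ} (hp : 0 ≤ p) (hq : 0 ≤ q)
    (e : ERWS μ p q s) :
    ∀ m n : ℕ, 1 ≤ m → 1 ≤ n →
      ∫ ω, (∏ j ∈ Finset.range m, (e.Sig n ω + j)) ∂μ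
        = (m.factorial : ℝ) * Real.Gamma (n + m * (p + q))
            / (Real.Gamma n * Real.Gamma (1 + m * (p + q))) := by
  intro m n _ hn
  have hc : -1 < (m : ℝ) * (p + q) := by
    linarith [mul_nonneg m.cast_nonneg (add_nonneg hp hq)]
  rw [eq_mul_Gamma_div_of_forall_succ_eq (a := fun N => ∫ ω, ∏ j ∈ range m, (e.Sig N ω + j) ∂μ)
    hc (fun N hN => e.integral_prod_Sig_succ m hN) hn, e.integral_prod_Sig_one]

/-- the rising factorial (Pochhammer) moments of the number of nonzero steps
satisfy `E[Σ_n (Σ_n + 1) ⋯ (Σ_n + m - 1)] = m! Γ(n + m b)/(Γ(n) Γ(1 + m b))`, `b = p + q`. -/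
theorem erws_Sig_pochhammer_moments
    {Ω : Type*} [m0 : MeasurableSpace Ω] {μ : Measure Ω} [IsProbabilityMeasure μ]
    {p q r s : ℝ} (hp : 0 ≤ p) (hq : 0 ≤ q) (hr0 : 0 < r) (hr1 : r < 1)
    (hpqr : p + q + r = 1) (hs0 : 0 ≤ s) (hs1 : s ≤ 1)
    (e : ERWS μ p q s) :
    ∀ m n : ℕ, 1 ≤ m → 1 ≤ n →
      ∫ ω, (∏ j ∈ Finset.range m, (e.Sig n ω + j)) ∂μ
        = (m.factorial : ℝ) * Real.Gamma (n + m * (p + q))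
            / (Real.Gamma n * Real.Gamma (1 + m * (p + q))) :=
  erws_Sig_pochhammer_moments_general (m0 := m0) hp hq e
end
end

section
/- For every n ≥ 1, the mean position of the ERWS is E[S_n] = (2s - 1)·Γ(n + a) / (Γ(n)·Γ(a + 1)). -/
open MeasureTheory Filter Real Topology

noncomputable section

/-!
Conditioning on `F n` and integrating gives `E[X (n+1)] = (a / n) E[S n]`, so the means satisfy
`E[S (n+1)] = ((n + a) / n) E[S n]` with `E[S 1] = 2s - 1`. The functional equation
`Γ(x + 1) = x Γ(x)` shows that `Γ(n + a) / (Γ(n) Γ(a + 1))` solves the same recurrence with value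
`1` at `n = 1`; `a > -1` keeps every Gamma value involved positive.
-/

theorem eq_mul_Gamma_div_of_recurrence {u : ℕ → ℝ} {a c : ℝ} (ha : -1 < a) (h₁ : u 1 = c)
    (hsucc : ∀ n, 1 ≤ n → u (n + 1) = (n + a) / n * u n) :
    ∀ n, 1 ≤ n → u n = c * Gamma (n + a) / (Gamma n * Gamma (a + 1)) := by
  intro n hn
  induction n, hn using Nat.le_induction with
  | base =>
    have : Gamma (a + 1) ≠ 0 := (Gamma_pos_of_pos (by linarith)).ne'
    rw [h₁, Nat.cast_one, Gamma_one, add_comm (1 : ℝ) a]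
    field_simp
  | succ n hn ih =>
    have hn' : (1 : ℝ) ≤ n := by exact_mod_cast hn
    have hGn : Gamma (n + 1) = n * Gamma n := Gamma_add_one (by positivity)
    have hGna : Gamma (n + 1 + a) = (n + a) * Gamma (n + a) := by
      rw [add_right_comm, Gamma_add_one (by linarith)]
    have : Gamma n ≠ 0 := (Gamma_pos_of_pos (by linarith)).ne'
    rw [hsucc n hn, ih, Nat.cast_succ, hGn, hGna]
    field_simp

namespace ERWS

variable {Ω : Type*} [m0 : MeasurableSpace Ω] {μ : Measure Ω} {p q s : ℝ} (e : ERWS μ p q s)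

theorem stronglyMeasurable_X {k : ℕ} (hk : 1 ≤ k) : StronglyMeasurable (e.X k) :=
  (e.adapted k hk).mono (e.F.le k)

theorem integrable_X [IsFiniteMeasure μ] {k : ℕ} (hk : 1 ≤ k) : Integrable (e.X k) μ := by
  refine (integrable_const (1 : ℝ)).mono' (e.stronglyMeasurable_X hk).aestronglyMeasurable
    (Eventually.of_forall fun ω => ?_)
  rcases e.val_mem k hk ω with h | h | h <;> simp [h]

theorem integrable_S [IsFiniteMeasure μ] (n : ℕ) : Integrable (e.S n) μ :=
  integrable_finsetSum _ fun _ hk => e.integrable_X (Finset.mem_Icc.mp hk).1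

theorem S_succ (n : ℕ) : e.S (n + 1) = e.S n + e.X (n + 1) := by
  funext ω
  exact Finset.sum_Icc_succ_top (Nat.le_add_left 1 n) _

theorem S_one_eq_indicator_sub_indicator :
    e.S 1 = {ω | e.X 1 ω = 1}.indicator 1 - {ω | e.X 1 ω = -1}.indicator 1 := by
  funext ω
  simp only [S, Finset.Icc_self, Finset.sum_singleton, Pi.sub_apply, Set.indicator_apply,
    Set.mem_ofPred_eq, Pi.one_apply]
  rcases e.val_mem 1 le_rfl ω with h | h | h <;> norm_num [h]

theorem integral_S_one [IsFiniteMeasure μ] (hs0 : 0 ≤ s) (hs1 : s ≤ 1) :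
    ∫ ω, e.S 1 ω ∂μ = 2 * s - 1 := by
  have hA : MeasurableSet {ω | e.X 1 ω = 1} :=
    (e.stronglyMeasurable_X le_rfl).measurable (measurableSet_singleton 1)
  have hB : MeasurableSet {ω | e.X 1 ω = -1} :=
    (e.stronglyMeasurable_X le_rfl).measurable (measurableSet_singleton (-1))
  rw [S_one_eq_indicator_sub_indicator, integral_sub' ((integrable_const 1).indicator hA)
      ((integrable_const 1).indicator hB), integral_indicator_one hA, integral_indicator_one hB,
    measureReal_def, measureReal_def, e.init_one, e.init_neg, ENNReal.toReal_ofReal hs0,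
    ENNReal.toReal_ofReal (by linarith)]
  ring

theorem integral_X_succ [IsFiniteMeasure μ] {n : ℕ} (hn : 1 ≤ n) :
    ∫ ω, e.X (n + 1) ω ∂μ = (p - q) / n * ∫ ω, e.S n ω ∂μ := by
  rw [← integral_condExp (e.F.le n), integral_congr_ae (e.cond_one n hn), ← integral_const_mul]
  congr with ω
  rw [S]
  ring

theorem integral_S_succ [IsFiniteMeasure μ] {n : ℕ} (hn : 1 ≤ n) :
    ∫ ω, e.S (n + 1) ω ∂μ = (n + (p - q)) / n * ∫ ω, e.S n ω ∂μ := by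
  have hn0 : (n : ℝ) ≠ 0 := by positivity
  rw [S_succ, Pi.add_def, integral_add (e.integrable_S n) (e.integrable_X (by omega)),
    e.integral_X_succ hn]
  field_simp

end ERWS

theorem erws_mean_position_general
    {Ω : Type*} [m0 : MeasurableSpace Ω] {μ : Measure Ω} [IsProbabilityMeasure μ]
    {p q r s : ℝ} (hp : 0 ≤ p) (hr0 : 0 < r)
    (hpqr : p + q + r = 1) (hs0 : 0 ≤ s) (hs1 : s ≤ 1)
    (e : ERWS μ p q s) :
    ∀ n : ℕ, 1 ≤ n →
      ∫ ω, e.S n ω ∂μ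
        = (2 * s - 1) * Real.Gamma (n + (p - q))
            / (Real.Gamma n * Real.Gamma ((p - q) + 1)) :=
  eq_mul_Gamma_div_of_recurrence (u := fun n => ∫ ω, e.S n ω ∂μ) (by linarith)
    (e.integral_S_one hs0 hs1) fun _ hn => e.integral_S_succ hn

/-- the mean position of the ERWS is
`E[S_n] = (2s - 1) Γ(n + a)/(Γ(n) Γ(a + 1))` where `a = p - q`. -/
theorem erws_mean_position
    {Ω : Type*} [m0 : MeasurableSpace Ω] {μ : Measure Ω} [IsProbabilityMeasure μ]
    {p q r s : ℝ} (hp : 0 ≤ p) (hq : 0 ≤ q) (hr0 : 0 < r) (hr1 : r < 1)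
    (hpqr : p + q + r = 1) (hs0 : 0 ≤ s) (hs1 : s ≤ 1)
    (e : ERWS μ p q s) :
    ∀ n : ℕ, 1 ≤ n →
      ∫ ω, e.S n ω ∂μ
        = (2 * s - 1) * Real.Gamma (n + (p - q))
            / (Real.Gamma n * Real.Gamma ((p - q) + 1)) :=
  erws_mean_position_general (m0 := m0) hp hr0 hpqr hs0 hs1 e
end
end

section
/- Let a ∈ (-1, 1) and b ∈ (0, 1) with 2a < b, and set a_k = Γ(k)Γ(a+1)/Γ(k+a) and b_k = Γ(k)Γ(b+1)/Γ(k+b) for k ≥ 1. Then lim_{n→∞} n^{2a - b} · Σ_{k=1}^{n} a_k² / (k·b_k) = (Γ(a+1))² / ((b - 2a)·Γ(b + 1)). -/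
open Filter Real Topology

noncomputable section

/-- `a_k = Γ(k)Γ(a+1)/Γ(k+a)`. -/
def aseq (a : ℝ) (k : ℕ) : ℝ := Real.Gamma k * Real.Gamma (a + 1) / Real.Gamma (k + a)

/-- `b_k = Γ(k)Γ(b+1)/Γ(k+b)`. -/
def bseq (b : ℝ) (k : ℕ) : ℝ := Real.Gamma k * Real.Gamma (b + 1) / Real.Gamma (k + b)

/-!
By Euler's limit formula, `Γ(k) k^c / Γ(k + c) → 1`, so `a_k k^a → Γ(a+1)` and `b_k k^b → Γ(b+1)`:
the summand `a_k² / (k b_k)` is asymptotic to `L k^(s-1)` with `L = Γ(a+1)² / Γ(b+1)` and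
`s = b - 2a > 0`. Comparing it, Stolz–Cesàro style, with the telescoping weights
`(k+1)^s - k^s`, which are asymptotic to `s k^(s-1)` (the derivative of `x ↦ x^s` at `1`), shows
that the partial sums are asymptotic to `L n^s / s`.
-/

namespace Real

theorem prod_range_add_eq_Gamma_add_div_Gamma {c : ℝ} (hc : ∀ m : ℕ, c ≠ -m) (n : ℕ) :
    ∏ j ∈ Finset.range n, (c + j) = Gamma (c + n) / Gamma c := by
  induction n with
  | zero => simp [div_self (Gamma_ne_zero hc)]
  | succ n ih =>
    have hcn : c + n ≠ 0 := fun h => hc n (eq_neg_of_add_eq_zero_left h)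
    rw [Finset.prod_range_succ, ih, Nat.cast_succ, ← add_assoc, Gamma_add_one hcn]
    ring

theorem GammaSeq_eq_rpow_mul_Gamma_div {c : ℝ} (hc : ∀ m : ℕ, c ≠ -m) (n : ℕ) :
    GammaSeq c n = (n : ℝ) ^ c * Gamma (n + 1) * Gamma c / Gamma (c + (n + 1)) := by
  rw [GammaSeq, prod_range_add_eq_Gamma_add_div_Gamma hc, Gamma_nat_eq_factorial, Nat.cast_succ,
    div_div_eq_mul_div]

theorem tendsto_Gamma_mul_rpow_div_Gamma_add {c : ℝ} (hc : ∀ m : ℕ, c ≠ -m) :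
    Tendsto (fun n : ℕ => Gamma n * (n : ℝ) ^ c / Gamma (n + c)) atTop (𝓝 1) := by
  have hΓc := Gamma_ne_zero hc
  have h := ((GammaSeq_tendsto_Gamma c).div_const (Gamma c)).div (tendsto_natCast_div_add_atTop c)
    one_ne_zero
  rw [div_self hΓc, div_one] at h
  refine h.congr' ?_
  filter_upwards [eventually_gt_atTop 0] with n hn0
  have hn : (n : ℝ) ≠ 0 := by positivity
  have hnc : (n : ℝ) + c ≠ 0 := fun h => hc n (eq_neg_of_add_eq_zero_right h)
  have hΓnc : Gamma (n + c) ≠ 0 := by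
    refine Gamma_ne_zero fun m h => hc (n + m) ?_
    push_cast
    linarith
  rw [Pi.div_apply, GammaSeq_eq_rpow_mul_Gamma_div hc, ← add_assoc, add_comm c, Gamma_add_one hnc,
    Gamma_add_one hn]
  field_simp

theorem tendsto_Gamma_mul_rpow_div_Gamma_add_of_neg_one_lt {c : ℝ} (hc : -1 < c) :
    Tendsto (fun n : ℕ => Gamma n * (n : ℝ) ^ c / Gamma (n + c)) atTop (𝓝 1) := by
  rcases eq_or_ne c 0 with rfl | hc0
  · refine tendsto_const_nhds.congr' ?_
    filter_upwards [eventually_gt_atTop 0] with n hn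
    rw [rpow_zero, mul_one, add_zero, div_self (Gamma_pos_of_pos (by positivity)).ne']
  · refine tendsto_Gamma_mul_rpow_div_Gamma_add fun m hm => ?_
    rcases m with _ | m
    · exact hc0 (by simpa using hm)
    · push_cast at hm
      linarith

end Real

theorem tendsto_rpow_sub_rpow_sub_one_div_rpow (s : ℝ) :
    Tendsto (fun m : ℕ => ((m : ℝ) ^ s - ((m : ℝ) - 1) ^ s) / (m : ℝ) ^ (s - 1)) atTop (𝓝 s) := by
  have hderiv : Tendsto (fun t : ℝ => t⁻¹ * ((1 + t) ^ s - 1)) (𝓝[≠] 0) (𝓝 s) := by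
    simpa using hasDerivAt_iff_tendsto_slope_zero.1
      (hasDerivAt_rpow_const (p := s) (x := 1) (Or.inl one_ne_zero))
  have hstep : Tendsto (fun m : ℕ => -(m : ℝ)⁻¹) atTop (𝓝[≠] 0) := by
    refine tendsto_nhdsWithin_iff.2 ⟨?_, ?_⟩
    · simpa using (tendsto_inv_atTop_zero.comp (tendsto_natCast_atTop_atTop (R := ℝ))).neg
    · filter_upwards [eventually_gt_atTop 0] with m hm
      simpa using hm.ne'
  refine (hderiv.comp hstep).congr' ?_
  filter_upwards [eventually_gt_atTop 0] with m hm0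
  have hm : (1 : ℝ) ≤ m := by exact_mod_cast hm0
  have hsub : ((m : ℝ) - 1) ^ s = (m : ℝ) ^ s * (1 + -(m : ℝ)⁻¹) ^ s := by
    rw [← mul_rpow (by positivity) (by linarith [inv_le_one_of_one_le₀ hm])]
    congr 1
    field_simp
    ring
  rw [Function.comp_apply, hsub, rpow_sub_one (by positivity)]
  field_simp
  ring

theorem tendsto_sum_range_div_sum_range {f g : ℕ → ℝ} {L : ℝ} (hg : ∀ k, 0 < g k)
    (hg_sum : Tendsto (fun n => ∑ k ∈ Finset.range n, g k) atTop atTop)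
    (h : Tendsto (fun k => f k / g k) atTop (𝓝 L)) :
    Tendsto (fun n => (∑ k ∈ Finset.range n, f k) / ∑ k ∈ Finset.range n, g k) atTop (𝓝 L) := by
  have hlo : (fun k => f k - L * g k) =o[atTop] g := by
    rw [Asymptotics.isLittleO_iff_tendsto fun k hk => absurd hk (hg k).ne']
    simpa [sub_div, mul_div_cancel_right₀ _ (hg _).ne'] using h.sub_const L
  have := ((hlo.sum_range (fun k => (hg k).le) hg_sum).tendsto_div_nhds_zero).add_const L
  rw [zero_add] at this
  refine this.congr' ?_
  filter_upwards [hg_sum.eventually_gt_atTop 0] with n hn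
  rw [Finset.sum_sub_distrib, ← Finset.mul_sum, sub_div, mul_div_cancel_right₀ _ hn.ne']
  ring

theorem Finset.sum_Icc_one_eq_sum_range_succ {M : Type*} [AddCommMonoid M] (f : ℕ → M) (n : ℕ) :
    ∑ k ∈ Finset.Icc 1 n, f k = ∑ k ∈ Finset.range n, f (k + 1) := by
  rw [← Finset.Ico_add_one_right_eq_Icc, Finset.sum_Ico_eq_sum_range]
  simp [add_comm]

theorem tendsto_rpow_neg_mul_sum_Icc {s L : ℝ} (hs : 0 < s) {c : ℕ → ℝ}
    (h : Tendsto (fun k : ℕ => c k / (k : ℝ) ^ (s - 1)) atTop (𝓝 L)) :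
    Tendsto (fun n : ℕ => (n : ℝ) ^ (-s) * ∑ k ∈ Finset.Icc 1 n, c k) atTop (𝓝 (L / s)) := by
  set g : ℕ → ℝ := fun k => ((k : ℝ) + 1) ^ s - (k : ℝ) ^ s
  have hg_pos : ∀ k, 0 < g k := fun k =>
    sub_pos.2 (rpow_lt_rpow (by positivity) (by linarith) hs)
  have hg_sum : ∀ n : ℕ, ∑ k ∈ Finset.range n, g k = (n : ℝ) ^ s := fun n => by
    simpa [g, zero_rpow hs.ne'] using Finset.sum_range_sub (fun k : ℕ => (k : ℝ) ^ s) n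
  have hratio : Tendsto (fun k => c (k + 1) / g k) atTop (𝓝 (L / s)) := by
    have hc := (tendsto_add_atTop_iff_nat 1).2 h
    have hg := (tendsto_add_atTop_iff_nat 1).2 (tendsto_rpow_sub_rpow_sub_one_div_rpow s)
    refine (hc.div hg hs.ne').congr fun k => ?_
    have : ((k : ℝ) + 1) ^ (s - 1) ≠ 0 := by positivity
    simp only [g, Pi.div_apply]
    push_cast
    field_simp
    ring_nf
  have hg_top : Tendsto (fun n => ∑ k ∈ Finset.range n, g k) atTop atTop := by
    simp only [hg_sum]
    exact (tendsto_rpow_atTop hs).comp tendsto_natCast_atTop_atTop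
  refine (tendsto_sum_range_div_sum_range hg_pos hg_top hratio).congr fun n => ?_
  rw [hg_sum, rpow_neg (Nat.cast_nonneg n), Finset.sum_Icc_one_eq_sum_range_succ, inv_mul_eq_div]

theorem bseq_eq_aseq : bseq = aseq := rfl

theorem tendsto_aseq_mul_rpow {a : ℝ} (ha : -1 < a) :
    Tendsto (fun k : ℕ => aseq a k * (k : ℝ) ^ a) atTop (𝓝 (Gamma (a + 1))) := by
  have h := (tendsto_Gamma_mul_rpow_div_Gamma_add_of_neg_one_lt ha).const_mul (Gamma (a + 1))
  rw [mul_one] at h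
  refine h.congr fun k => ?_
  simp only [aseq]
  ring

theorem sq_div_mul_div_rpow_eq {x : ℝ} (hx : 0 < x) (A B a b : ℝ) :
    A ^ 2 / (x * B) / x ^ (b - 2 * a - 1) = (A * x ^ a) ^ 2 / (B * x ^ b) := by
  have hxb : x ^ b = x ^ a * x ^ a * x * x ^ (b - 2 * a - 1) := by
    rw [← rpow_add hx, ← rpow_add_one hx.ne', ← rpow_add hx]
    ring_nf
  rw [hxb]
  field_simp

theorem vn_asymptotics_general {a b : ℝ} (ha1 : -1 < a) (hb0 : 0 < b)
    (hab : 2 * a < b) :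
    Tendsto
      (fun n : ℕ => (n : ℝ) ^ (2 * a - b) *
        ∑ k ∈ Finset.Icc 1 n, (aseq a k) ^ 2 / (k * bseq b k))
      atTop
      (𝓝 ((Real.Gamma (a + 1)) ^ 2 / ((b - 2 * a) * Real.Gamma (b + 1)))) := by
  rw [bseq_eq_aseq]
  have hratio : Tendsto (fun k : ℕ => (aseq a k) ^ 2 / (k * aseq b k) / (k : ℝ) ^ (b - 2 * a - 1))
      atTop (𝓝 (Gamma (a + 1) ^ 2 / Gamma (b + 1))) := by
    refine (((tendsto_aseq_mul_rpow ha1).pow 2).div (tendsto_aseq_mul_rpow (by linarith))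
      (Gamma_pos_of_pos (by linarith)).ne').congr' ?_
    filter_upwards [eventually_gt_atTop 0] with k hk
    exact (sq_div_mul_div_rpow_eq (by positivity) _ _ a b).symm
  have h := tendsto_rpow_neg_mul_sum_Icc (by linarith) hratio
  rwa [neg_sub, div_div, mul_comm (Gamma (b + 1))] at h

/-- for `a ∈ (-1,1)`, `b ∈ (0,1)` with `2a < b`,
`n^{2a-b} ∑_{k=1}^n a_k²/(k b_k) → (Γ(a+1))²/((b-2a) Γ(b+1))`. -/
theorem vn_asymptotics {a b : ℝ} (ha1 : -1 < a) (ha2 : a < 1) (hb0 : 0 < b) (hb1 : b < 1)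
    (hab : 2 * a < b) :
    Tendsto
      (fun n : ℕ => (n : ℝ) ^ (2 * a - b) *
        ∑ k ∈ Finset.Icc 1 n, (aseq a k) ^ 2 / (k * bseq b k))
      atTop
      (𝓝 ((Real.Gamma (a + 1)) ^ 2 / ((b - 2 * a) * Real.Gamma (b + 1)))) :=
  vn_asymptotics_general ha1 hb0 hab
end
end
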